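/- Let d be a positive integer, let A be a real number, and let l⁰, l^∞, w⁰, w^∞ be positive integers. Define the real polynomial f(b) = (w⁰)^{2(d+1)}·b^{2d+3}·(A·l^∞ + l⁰(d+1)w^∞ − b(d+1)l⁰w⁰) − (w⁰)^{d+2}(w^∞)^{d}·b^{d+3}·(d+1)·(A(d+1)l^∞ − l⁰((d+1)w⁰ + (d+2)w^∞)) + (w⁰)^{d+1}(w^∞)^{d+1}·b^{d+2}·(2Ad(d+2)l^∞ − (d+1)(2d+3)l⁰(w⁰ + w^∞)) − (w⁰)^{d}(w^∞)^{d+2}·b^{d+1}·(d+1)·(A(d+1)l^∞ − l⁰((d+2)w⁰ + (d+1)w^∞)) + (w^∞)^{2(d+1)}·(b·(A·l^∞ + l⁰(d+1)w⁰) − (d+1)l⁰w^∞). Then (w⁰·b − w^∞)³ divides f(b) in the polynomial ring ℝ[b]. -/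

import Mathlib

open Polynomial

/-- The polynomial `f(b)` of Equation (functionf), as an element of `ℝ[b]`. -/
noncomputable def F (d : ℕ) (A : ℝ) (l0 linf w0 winf : ℕ) : Polynomial ℝ :=
  C ((w0:ℝ)^(2*(d+1))) * X^(2*d+3) *
      (C (A*(linf:ℝ) + (l0:ℝ)*((d:ℝ)+1)*(winf:ℝ)) - C (((d:ℝ)+1)*(l0:ℝ)*(w0:ℝ)) * X)
    - C ((w0:ℝ)^(d+2) * (winf:ℝ)^d * ((d:ℝ)+1) *
        (A*((d:ℝ)+1)*(linf:ℝ) - (l0:ℝ)*(((d:ℝ)+1)*(w0:ℝ) + ((d:ℝ)+2)*(winf:ℝ)))) * X^(d+3)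
    + C ((w0:ℝ)^(d+1) * (winf:ℝ)^(d+1) *
        (2*A*(d:ℝ)*((d:ℝ)+2)*(linf:ℝ) - ((d:ℝ)+1)*(2*(d:ℝ)+3)*(l0:ℝ)*((w0:ℝ)+(winf:ℝ)))) * X^(d+2)
    - C ((w0:ℝ)^d * (winf:ℝ)^(d+2) * ((d:ℝ)+1) *
        (A*((d:ℝ)+1)*(linf:ℝ) - (l0:ℝ)*(((d:ℝ)+2)*(w0:ℝ) + ((d:ℝ)+1)*(winf:ℝ)))) * X^(d+1)
    + C ((winf:ℝ)^(2*(d+1))) *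
      (C (A*(linf:ℝ) + (l0:ℝ)*((d:ℝ)+1)*(w0:ℝ)) * X - C (((d:ℝ)+1)*(l0:ℝ)*(winf:ℝ)))


/-!
Put `x = w⁰ b`, `y = w^∞` and `L_n(x, y) = x^(n+1) - (n+1) x y^n + n y^(n+1)`, the remainder of the
first-order Taylor expansion of `t ↦ t^(n+1)` at `y`, so that `(x - y)² ∣ L_n(x, y)`. Then
`f = b · (A l^∞ · P - (d+1) l⁰ (x - y) x^d L_(d+1)(x, y)) + (d+1) l⁰ (x - y) y^d L_(d+1)(y, x)`
with `P = (x^(d+1) - y^(d+1))² - (d+1)² (x - y)² x^d y^d`. Expanding `x^(d+1) - y^(d+1)` once as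
`(d+1) y^d (x - y) + L_d(x, y)` and once as `(d+1) x^d (x - y) - L_d(y, x)` shows `(x - y)³ ∣ P`.
-/

section CommRing

variable {R : Type*} [CommRing R]

theorem sub_sq_dvd_pow_succ_sub_mul_add (x y : R) (n : ℕ) :
    (x - y) ^ 2 ∣ x ^ (n + 1) - (n + 1) * x * y ^ n + n * y ^ (n + 1) := by
  convert sq_dvd_add_pow_sub_sub (x - y) y (n + 1) using 1
  push_cast
  ring

theorem sub_pow_three_dvd_sq_pow_succ_sub (x y : R) (n : ℕ) :
    (x - y) ^ 3 ∣ (x ^ (n + 1) - y ^ (n + 1)) ^ 2 - ((n + 1) * (x - y)) ^ 2 * x ^ n * y ^ n := by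
  obtain ⟨p, hp⟩ := sub_sq_dvd_pow_succ_sub_mul_add x y n
  obtain ⟨q, hq⟩ := sub_sq_dvd_pow_succ_sub_mul_add y x n
  refine ⟨(n + 1) * (x ^ n * p - y ^ n * q) - (x - y) * p * q, ?_⟩
  linear_combination (-(x ^ (n + 1) - y ^ (n + 1))) * hq +
    ((n + 1) * x ^ n * (x - y) - (x - y) ^ 2 * q) * hp

end CommRing

theorem stmt_10_general (d : ℕ) (A : ℝ) (l0 linf w0 winf : ℕ) :
    (C (w0:ℝ) * X - C (winf:ℝ))^3 ∣ F d A l0 linf w0 winf := by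
  set x : ℝ[X] := C (w0:ℝ) * X
  set y : ℝ[X] := C (winf:ℝ)
  set c : ℝ[X] := (l0 : ℝ[X]) * (d + 1)
  set m : ℝ[X] := ((d + 1 : ℕ) : ℝ[X])
  have hF : F d A l0 linf w0 winf =
      X * (C (A * linf) *
          ((x ^ (d + 1) - y ^ (d + 1)) ^ 2 - ((d + 1 : ℝ[X]) * (x - y)) ^ 2 * x ^ d * y ^ d)
        - c * ((x - y) * x ^ d *
          (x ^ (d + 1 + 1) - (m + 1) * x * y ^ (d + 1) + m * y ^ (d + 1 + 1))))
      + c * ((x - y) * y ^ d *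
          (y ^ (d + 1 + 1) - (m + 1) * y * x ^ (d + 1) + m * x ^ (d + 1 + 1))) := by
    simp only [F, x, y, c, m, map_mul, map_add, map_sub, map_pow, map_natCast, map_one, map_ofNat,
      Nat.cast_add, Nat.cast_one]
    ring
  have hxy := sub_sq_dvd_pow_succ_sub_mul_add x y (d + 1)
  have hyx := sub_sq_dvd_pow_succ_sub_mul_add y x (d + 1)
  rw [← neg_sub, neg_sq] at hyx
  rw [hF]
  refine dvd_add (dvd_mul_of_dvd_right
    (dvd_sub ((sub_pow_three_dvd_sq_pow_succ_sub x y d).mul_left _) ?_) _) ?_ <;> rw [pow_succ']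
  · exact (mul_dvd_mul (dvd_mul_right _ _) hxy).mul_left _
  · exact (mul_dvd_mul (dvd_mul_right _ _) hyx).mul_left _

/-- `(w⁰·b - w^∞)³` divides `f(b)` in `ℝ[b]`. -/
theorem stmt_10 (d : ℕ) (hd : 0 < d) (A : ℝ) (l0 linf w0 winf : ℕ)
    (hl0 : 0 < l0) (hlinf : 0 < linf) (hw0 : 0 < w0) (hwinf : 0 < winf) :
    (C (w0:ℝ) * X - C (winf:ℝ))^3 ∣ F d A l0 linf w0 winf :=
  stmt_10_general d A l0 linf w0 winf
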